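/- arXiv:2405.06231 — 5 statements merged into one kernel-verified Lean document; each statement's English description precedes it below -/
import Mathlib

section
/- The binary entropy difference function f(α,p) = h((1-α)p) - h(αp), where h is the binary entropy function, is monotonically decreasing in p on [1/2, 1] for any fixed 0 ≤ α ≤ 1/2; consequently its maximum over p ∈ [0,1] is attained at some p̃ ≤ 1/2. -/
open Real Set

/-- Binary entropy function `h(x) = -x log₂ x - (1-x) log₂ (1-x)`. -/
noncomputable def binEnt (x : ℝ) : ℝ :=
  -(x * Real.logb 2 x) - (1 - x) * Real.logb 2 (1 - x)

/-!
Write `G t = t * (log (1 - t) - log t)`. Then `p f'(p) log 2 = G((1-α)p) - G(αp)`, so it suffices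
that `G y ≤ G x` whenever `x ≤ y` and `1/2 ≤ x + y ≤ 1`. For `y ≥ 1/2` this is a comparison of
signs. Otherwise, with `u = 1 - 2t`, `G t = t(1-2t) B(u)` where
`B(u) = (log(1+u) - log(1-u))/u = ∑ 2u^(2k)/(2k+1)` is increasing on `(0, 1)`; both factors are
larger at `x` than at `y`, the first because `t(1-2t)` is symmetric about `1/4` and `x + y ≥ 1/2`.
The maximum over `[0, 1]` is then the maximum over the compact interval `[0, 1/2]`.
-/

lemma binEnt_eq_binEntropy_div (x : ℝ) : binEnt x = binEntropy x / log 2 := by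
  simp only [binEnt, binEntropy, logb, log_inv]
  ring

lemma log_one_add_sub_log_one_sub_div_le {s t : ℝ} (hs : 0 < s) (hst : s ≤ t) (ht : t < 1) :
    (log (1 + s) - log (1 - s)) / s ≤ (log (1 + t) - log (1 - t)) / t := by
  have series {x : ℝ} (hx : 0 < x) (hx1 : x < 1) :
      HasSum (fun k : ℕ => 2 * (1 / (2 * k + 1)) * x ^ (2 * k))
        ((log (1 + x) - log (1 - x)) / x) :=
    ((hasSum_log_sub_log_of_abs_lt_one (abs_lt.2 ⟨by linarith, hx1⟩)).div_const x).congr_fun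
      fun k => by rw [pow_succ]; field_simp
  refine hasSum_le (fun k => ?_) (series hs (by linarith)) (series (by linarith) ht)
  gcongr

noncomputable def mulDerivBinEntropy (t : ℝ) : ℝ := t * (log (1 - t) - log t)

lemma mulDerivBinEntropy_nonneg {t : ℝ} (h0 : 0 ≤ t) (h : t ≤ 1 / 2) :
    0 ≤ mulDerivBinEntropy t := by
  rcases h0.eq_or_lt with rfl | h0
  · simp [mulDerivBinEntropy]
  · exact mul_nonneg h0.le (sub_nonneg.2 (log_le_log h0 (by linarith)))

lemma mulDerivBinEntropy_nonpos {t : ℝ} (h : 1 / 2 ≤ t) (h1 : t ≤ 1) :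
    mulDerivBinEntropy t ≤ 0 := by
  rcases h1.eq_or_lt with rfl | h1
  · simp [mulDerivBinEntropy]
  · exact mul_nonpos_of_nonneg_of_nonpos (by linarith)
      (sub_nonpos.2 (log_le_log (by linarith) (by linarith)))

lemma mulDerivBinEntropy_eq {t : ℝ} (h0 : 0 < t) (h : t < 1 / 2) :
    mulDerivBinEntropy t =
      t * (1 - 2 * t) * ((log (1 + (1 - 2 * t)) - log (1 - (1 - 2 * t))) / (1 - 2 * t)) := by
  have h2 : 1 + (1 - 2 * t) = 2 * (1 - t) := by ring
  have h3 : 1 - (1 - 2 * t) = 2 * t := by ring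
  rw [mul_assoc, mul_div_cancel₀ _ (by linarith), h2, h3, log_mul two_ne_zero (by linarith),
    log_mul two_ne_zero h0.ne', mulDerivBinEntropy]
  ring

lemma mulDerivBinEntropy_le_of_le {x y : ℝ} (hx : 0 ≤ x) (hxy : x ≤ y) (h1 : 1 / 2 ≤ x + y)
    (h2 : x + y ≤ 1) : mulDerivBinEntropy y ≤ mulDerivBinEntropy x := by
  rcases le_or_gt (1 / 2) y with hy | hy
  · exact (mulDerivBinEntropy_nonpos hy (by linarith)).trans
      (mulDerivBinEntropy_nonneg hx (by linarith))
  set B : ℝ → ℝ := fun u => (log (1 + u) - log (1 - u)) / u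
  have hB : B (1 - 2 * y) ≤ B (1 - 2 * x) :=
    log_one_add_sub_log_one_sub_div_le (by linarith) (by linarith) (by linarith)
  have hB0 : 0 ≤ B (1 - 2 * y) :=
    div_nonneg (sub_nonneg.2 (log_le_log (by linarith) (by linarith))) (by linarith)
  have hquad : y * (1 - 2 * y) ≤ x * (1 - 2 * x) := by nlinarith
  rw [mulDerivBinEntropy_eq (by linarith) hy, mulDerivBinEntropy_eq (by linarith) (by linarith)]
  calc y * (1 - 2 * y) * B (1 - 2 * y) ≤ x * (1 - 2 * x) * B (1 - 2 * y) :=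
        mul_le_mul_of_nonneg_right hquad hB0
    _ ≤ x * (1 - 2 * x) * B (1 - 2 * x) := mul_le_mul_of_nonneg_left hB (by nlinarith)

lemma hasDerivAt_binEntropy_const_mul {c p : ℝ} (hc : 0 ≤ c) (hp : 0 < p) (hcp : c * p < 1) :
    HasDerivAt (fun q => binEntropy (c * q)) (mulDerivBinEntropy (c * p) / p) p := by
  rcases hc.eq_or_lt with rfl | hc
  · simpa [mulDerivBinEntropy] using hasDerivAt_const p (0 : ℝ)
  · refine ((hasDerivAt_binEntropy (mul_pos hc hp).ne' hcp.ne).comp p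
      ((hasDerivAt_id p).const_mul c)).congr_deriv ?_
    unfold mulDerivBinEntropy
    field_simp

theorem antitoneOn_binEntropy_sub {α : ℝ} (hα0 : 0 ≤ α) (hα : α ≤ 1 / 2) :
    AntitoneOn (fun p => binEntropy ((1 - α) * p) - binEntropy (α * p)) (Icc (1 / 2) 1) := by
  refine antitoneOn_of_hasDerivWithinAt_nonpos (convex_Icc _ _) (by fun_prop)
    (f' := fun p => (mulDerivBinEntropy ((1 - α) * p) - mulDerivBinEntropy (α * p)) / p)
    (fun p hp => ?_) (fun p hp => ?_)
  all_goals
    rw [interior_Icc] at hp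
    obtain ⟨hp1, hp2⟩ := hp
  · rw [sub_div]
    exact ((hasDerivAt_binEntropy_const_mul (by linarith) (by linarith) (by nlinarith)).sub
      (hasDerivAt_binEntropy_const_mul hα0 (by linarith) (by nlinarith))).hasDerivWithinAt
  · refine div_nonpos_of_nonpos_of_nonneg (sub_nonpos.2 ?_) (by linarith)
    exact mulDerivBinEntropy_le_of_le (by positivity) (by nlinarith) (by linarith) (by linarith)

lemma exists_forall_le_of_antitoneOn {f : ℝ → ℝ} {a b c : ℝ} (hab : a ≤ b)
    (hf : ContinuousOn f (Icc a b)) (hanti : AntitoneOn f (Icc b c)) :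
    ∃ x ∈ Icc a b, ∀ y ∈ Icc a c, f y ≤ f x := by
  obtain ⟨x, hx, hmax⟩ := isCompact_Icc.exists_isMaxOn (nonempty_Icc.2 hab) hf
  refine ⟨x, hx, fun y hy => ?_⟩
  rcases le_or_gt y b with hyb | hby
  · exact hmax ⟨hy.1, hyb⟩
  · exact (hanti ⟨le_rfl, hby.le.trans hy.2⟩ ⟨hby.le, hy.2⟩ hby.le).trans
      (hmax (right_mem_Icc.2 hab))

theorem entropy_diff_antitone_and_max_le_half (α : ℝ)
    (hα : α ∈ Set.Icc (0 : ℝ) (1/2)) :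
    AntitoneOn (fun p : ℝ => binEnt ((1 - α) * p) - binEnt (α * p))
      (Set.Icc (1/2 : ℝ) 1) ∧
    ∃ pt ∈ Set.Icc (0 : ℝ) (1/2), ∀ p ∈ Set.Icc (0 : ℝ) 1,
      binEnt ((1 - α) * p) - binEnt (α * p) ≤
        binEnt ((1 - α) * pt) - binEnt (α * pt) := by
  have hbinEnt : (fun p : ℝ => binEnt ((1 - α) * p) - binEnt (α * p)) =
      fun p => (binEntropy ((1 - α) * p) - binEntropy (α * p)) / log 2 := by
    funext p
    simp only [binEnt_eq_binEntropy_div, sub_div]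
  have hanti : AntitoneOn (fun p : ℝ => binEnt ((1 - α) * p) - binEnt (α * p)) (Icc (1 / 2) 1) := by
    rw [hbinEnt]
    exact fun a ha b hb hab => div_le_div_of_nonneg_right
      (antitoneOn_binEntropy_sub hα.1 hα.2 ha hb hab) (log_pos one_lt_two).le
  refine ⟨hanti, exists_forall_le_of_antitoneOn (by norm_num) ?_ hanti⟩
  rw [hbinEnt]
  fun_prop
end

section
/- For input ρ(ε) = diag(1-ε, ε), the complementary channel output F^c(ρ(ε)) = P₀ρ(ε)P₀† + P₁ρ(ε)P₁† has eigenvalues gε and (1-gε)/2 · (1 ± √(u²+v²)), where u = 2δ√(p(1-p)), v = 1-2p, and δ = (1 + ε(g-2))/(1 - εg). -/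
open Matrix

/-- Complementary Kraus operator `P₀ = √g|0⟩⟨1| + √(1-p)|1⟩⟨0| + √p|2⟩⟨0|`. -/
noncomputable def Pk0 (p g : ℝ) : Matrix (Fin 3) (Fin 2) ℂ :=
  !![0, (Real.sqrt g : ℂ);
     (Real.sqrt (1 - p) : ℂ), 0;
     (Real.sqrt p : ℂ), 0]

/-- Complementary Kraus operator `P₁ = √((1-g)(1-p))|1⟩⟨1| - √(p(1-g))|2⟩⟨1|`. -/
noncomputable def Pk1 (p g : ℝ) : Matrix (Fin 3) (Fin 2) ℂ :=
  !![0, 0;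
     0, (Real.sqrt ((1 - g) * (1 - p)) : ℂ);
     0, -(Real.sqrt (p * (1 - g)) : ℂ)]

/-- The complementary channel `F^c(ρ) = P₀ ρ P₀† + P₁ ρ P₁†`. -/
noncomputable def dampDephComp (p g : ℝ) (ρ : Matrix (Fin 2) (Fin 2) ℂ) :
    Matrix (Fin 3) (Fin 3) ℂ :=
  Pk0 p g * ρ * (Pk0 p g)ᴴ + Pk1 p g * ρ * (Pk1 p g)ᴴ

/-! For a diagonal input the output is block diagonal: the `|0⟩` block is `gε`, and on
`span {|1⟩, |2⟩}` it is `(1 - gε)` times `[[1 - p, δ√(p(1-p))], [δ√(p(1-p)), p]]`, because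
`(1 - ε) - (1 - g)ε = δ(1 - gε)`. This 2 × 2 block has trace `1` and discriminant
`(1 - 2p)² + 4δ²p(1 - p) = u² + v²`, so its eigenvalues are `(1 ± √(u² + v²))/2`. -/

theorem dampDephComp_diagonal {p g : ℝ} (hp₀ : 0 ≤ p) (hp₁ : p ≤ 1) (hg₀ : 0 ≤ g)
    (hg₁ : g ≤ 1) (a b : ℂ) :
    dampDephComp p g !![a, 0; 0, b] =
      !![g * b, 0, 0;
         0, (1 - p) * (a + (1 - g) * b), √(p * (1 - p)) * (a - (1 - g) * b);
         0, √(p * (1 - p)) * (a - (1 - g) * b), p * (a + (1 - g) * b)] := by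
  have sq {x : ℝ} (hx : 0 ≤ x) : (√x : ℂ) * √x = x := by
    exact_mod_cast Real.mul_self_sqrt hx
  have mix₀ : (√(1 - p) : ℂ) * √p = √(p * (1 - p)) := by
    rw [← Complex.ofReal_mul, ← Real.sqrt_mul (by linarith), mul_comm]
  have mix₁ : (√((1 - g) * (1 - p)) : ℂ) * √(p * (1 - g)) = (1 - g) * √(p * (1 - p)) := by
    rw [← Complex.ofReal_mul, ← Real.sqrt_mul (by nlinarith),
      show (1 - g) * (1 - p) * (p * (1 - g)) = (1 - g) ^ 2 * (p * (1 - p)) by ring,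
      Real.sqrt_mul (sq_nonneg _), Real.sqrt_sq (by linarith)]
    push_cast; ring
  ext i j
  fin_cases i <;> fin_cases j <;>
    simp only [dampDephComp, Pk0, Pk1, Matrix.add_apply, mul_apply, Fin.sum_univ_two,
      conjTranspose_apply, RCLike.star_def, Complex.conj_ofReal, Fin.zero_eta, Fin.mk_one,
      Fin.reduceFinMk, of_apply, cons_val', cons_val_zero, cons_val_one, cons_val,
      cons_val_fin_one, map_zero, map_neg, mul_zero, zero_mul, add_zero, zero_add, mul_neg,
      neg_mul, neg_neg, neg_zero]
  · linear_combination b * sq hg₀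
  · linear_combination (norm := (push_cast; ring1))
      a * sq (x := 1 - p) (by linarith) + b * sq (x := (1 - g) * (1 - p)) (by nlinarith)
  · linear_combination a * mix₀ - b * mix₁
  · linear_combination a * mix₀ - b * mix₁
  · linear_combination (norm := (push_cast; ring1))
      a * sq hp₀ + b * sq (x := p * (1 - g)) (by nlinarith)

theorem spectrum_fin_three_block {K : Type*} [Field K] (a b c c' d μ ν : K)
    (hsum : μ + ν = b + d) (hprod : μ * ν = b * d - c * c') :
    spectrum K !![a, 0, 0; 0, b, c; 0, c', d] = {a, μ, ν} := by
  ext z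
  have hdet : (scalar (Fin 3) z - !![a, 0, 0; 0, b, c; 0, c', d]).det =
      (z - a) * (z - μ) * (z - ν) := by
    simp only [det_fin_three, scalar_apply, Matrix.sub_apply, diagonal_apply_eq, diagonal_apply_ne,
      of_apply, cons_val', cons_val_zero, cons_val_one, cons_val, cons_val_fin_one, ne_eq,
      Fin.reduceEq, not_false_eq_true]
    linear_combination (z - a) * (z * hsum - hprod)
  rw [mem_spectrum_iff_isRoot_charpoly, Polynomial.IsRoot, eval_charpoly, hdet]
  simp only [mul_eq_zero, sub_eq_zero, Set.mem_insert_iff, Set.mem_singleton_iff, or_assoc]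

theorem dampDephComp_output_spectrum (p g ε u v δ : ℝ)
    (hp : p ∈ Set.Icc (0 : ℝ) (1/2)) (hg : g ∈ Set.Ico (0 : ℝ) 1)
    (hε : ε ∈ Set.Icc (0 : ℝ) 1)
    (hδ : δ = (1 + ε * (g - 2)) / (1 - ε * g))
    (hu : u = 2 * δ * Real.sqrt (p * (1 - p)))
    (hv : v = 1 - 2 * p) :
    spectrum ℂ (dampDephComp p g !![((1 - ε : ℝ) : ℂ), 0; 0, ((ε : ℝ) : ℂ)]) =
      {((g * ε : ℝ) : ℂ),
       (((1 - g * ε) / 2 * (1 + Real.sqrt (u ^ 2 + v ^ 2)) : ℝ) : ℂ),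
       (((1 - g * ε) / 2 * (1 - Real.sqrt (u ^ 2 + v ^ 2)) : ℝ) : ℂ)} := by
  obtain ⟨hp₀, hp₁⟩ := hp
  obtain ⟨hg₀, hg₁⟩ := hg
  obtain ⟨-, hε₁⟩ := hε
  have hδt : δ * (1 - g * ε) = 1 - 2 * ε + g * ε := by
    have : 1 - ε * g ≠ 0 := by nlinarith
    rw [hδ]
    field_simp
    ring
  have hs : √(u ^ 2 + v ^ 2) ^ 2 = u ^ 2 + v ^ 2 := Real.sq_sqrt (by positivity)
  have hq : √(p * (1 - p)) ^ 2 = p * (1 - p) := Real.sq_sqrt (by nlinarith)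
  have hprod :
      (1 - g * ε) / 2 * (1 + √(u ^ 2 + v ^ 2)) * ((1 - g * ε) / 2 * (1 - √(u ^ 2 + v ^ 2))) =
        (1 - p) * (1 - ε + (1 - g) * ε) * (p * (1 - ε + (1 - g) * ε)) -
          √(p * (1 - p)) * (1 - ε - (1 - g) * ε) * (√(p * (1 - p)) * (1 - ε - (1 - g) * ε)) := by
    subst hu hv
    linear_combination (-(1 - g * ε) ^ 2 / 4) * hs
      + ((1 - 2 * ε + g * ε) ^ 2 - (1 - g * ε) ^ 2 * δ ^ 2) * hq
      - p * (1 - p) * (δ * (1 - g * ε) + (1 - 2 * ε + g * ε)) * hδt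
  rw [dampDephComp_diagonal hp₀ (by linarith) hg₀ hg₁.le]
  push_cast
  apply spectrum_fin_three_block
  · ring
  · simpa using congrArg Complex.ofReal hprod
end

section
/- For 0 ≤ p ≤ 1/2 and g satisfying g < 1 - 1/(2(1 - 2p(1-p))), the 'log-singularity rate' of the channel output, x_d = 1-g, strictly exceeds that of the environment output, x_e = g + 4p(1-p)(1-g); conversely if g ≥ 1 - 1/(2(1-2p(1-p))) then x_d ≤ x_e. -/
/-! Since `1 - 4p(1-p) = 2q - 1` with `q = 1 - 2p(1-p) = p² + (1-p)² > 0`, the difference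
`x_d - x_e` equals `2q(1-g) - 1`; so `x_d > x_e` exactly when `1 - g > 1/(2q)`, i.e. `g < g_max(p)`. -/

lemma one_sub_two_mul_mul_one_sub_pos (p : ℝ) : 0 < 1 - 2 * p * (1 - p) := by
  nlinarith [sq_nonneg p, sq_nonneg (1 - p)]

lemma lt_one_sub_one_div_iff {a g : ℝ} (ha : 0 < a) : g < 1 - 1 / a ↔ 1 < (1 - g) * a := by
  rw [lt_sub_comm, div_lt_iff₀ ha]

theorem log_singularity_rate_comparison_general (p g : ℝ) :
    (g < 1 - 1 / (2 * (1 - 2 * p * (1 - p))) →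
      1 - g > g + 4 * p * (1 - p) * (1 - g)) ∧
    (g ≥ 1 - 1 / (2 * (1 - 2 * p * (1 - p))) →
      1 - g ≤ g + 4 * p * (1 - p) * (1 - g)) := by
  have hiff := lt_one_sub_one_div_iff (g := g)
    (mul_pos two_pos (one_sub_two_mul_mul_one_sub_pos p))
  have hdiff : (1 - g) - (g + 4 * p * (1 - p) * (1 - g))
      = (1 - g) * (2 * (1 - 2 * p * (1 - p))) - 1 := by ring
  constructor
  · intro h
    linarith [hiff.mp h]
  · intro h
    linarith [not_lt.mp (hiff.not.mp (not_lt.mpr h))]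

theorem log_singularity_rate_comparison (p g : ℝ)
    (hp : p ∈ Set.Icc (0 : ℝ) (1/2)) (hg : g ∈ Set.Icc (0 : ℝ) 1) :
    (g < 1 - 1 / (2 * (1 - 2 * p * (1 - p))) →
      1 - g > g + 4 * p * (1 - p) * (1 - g)) ∧
    (g ≥ 1 - 1 / (2 * (1 - 2 * p * (1 - p))) →
      1 - g ≤ g + 4 * p * (1 - p) * (1 - g)) :=
  log_singularity_rate_comparison_general p g
end

section
/- For 1 ≥ g ≥ (1-2p)²/(1+(1-2p)²) with p ∈ [0,1/2], the quantities γ = (g - (1-2p)²(1-g))/(1 - (1-2p)²(1-g)) and δ = 1/2 - (1-2p)√(1 - (1-2p)²(1-g))/(2√g) satisfy 0 ≤ γ ≤ 1 and 0 ≤ δ ≤ 1, i.e., they define valid damping and dephasing channel parameters. -/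
/-!
Write `q = 1 - 2p ∈ [0, 1]`, `c = q²` and `A = 1 - c (1 - g)`. The hypothesis on `g` says
`c ≤ g (1 + c)`, i.e. the numerator `g - c (1 - g)` of `γ` is nonnegative, and it falls short of
`A` by `1 - g ≥ 0`; hence `γ ∈ [0, 1]`. For `δ` everything reduces to `q √A ≤ √g`, i.e.
`c A ≤ g`, which holds because `g - c A = (1 - c) (g (1 + c) - c)`.
-/

open Real Set

noncomputable def dampingParameter (c g : ℝ) : ℝ := (g - c * (1 - g)) / (1 - c * (1 - g))

noncomputable def dephasingParameter (q g : ℝ) : ℝ :=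
  1 / 2 - q * √(1 - q ^ 2 * (1 - g)) / (2 * √g)

theorem dampingParameter_mem_Icc {c g : ℝ} (hg : g ≤ 1) (hcg : c ≤ g * (1 + c)) :
    dampingParameter c g ∈ Icc 0 1 := by
  have hnum : 0 ≤ g - c * (1 - g) := by linarith
  have hle : g - c * (1 - g) ≤ 1 - c * (1 - g) := by linarith
  exact ⟨div_nonneg hnum (hnum.trans hle), div_le_one_of_le₀ hle (hnum.trans hle)⟩

theorem mul_one_sub_mul_one_sub_le_of_le_mul_one_add {c g : ℝ} (hc : c ≤ 1)
    (hcg : c ≤ g * (1 + c)) : c * (1 - c * (1 - g)) ≤ g := by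
  linarith [mul_nonneg (sub_nonneg.2 hc) (sub_nonneg.2 hcg)]

theorem dephasingParameter_mem_Icc {q g : ℝ} (hq : 0 ≤ q)
    (hqg : q ^ 2 * (1 - q ^ 2 * (1 - g)) ≤ g) : dephasingParameter q g ∈ Icc 0 1 := by
  have hroot : q * √(1 - q ^ 2 * (1 - g)) ≤ √g := by
    calc q * √(1 - q ^ 2 * (1 - g)) = √(q ^ 2 * (1 - q ^ 2 * (1 - g))) := by
          rw [sqrt_mul (sq_nonneg q), sqrt_sq hq]
      _ ≤ √g := sqrt_le_sqrt hqg
  have hratio : q * √(1 - q ^ 2 * (1 - g)) / (2 * √g) ≤ 1 / 2 :=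
    div_le_of_le_mul₀ (by positivity) (by norm_num) (by linarith)
  have hratio_nonneg : 0 ≤ q * √(1 - q ^ 2 * (1 - g)) / (2 * √g) := by positivity
  constructor <;> unfold dephasingParameter <;> linarith

theorem antidegrading_parameters_valid_general (p g : ℝ)
    (hp : p ∈ Set.Icc (0 : ℝ) (1/2))
    (hg1 : g ≤ 1) (hg2 : (1 - 2 * p) ^ 2 / (1 + (1 - 2 * p) ^ 2) ≤ g) :
    (0 ≤ (g - (1 - 2 * p) ^ 2 * (1 - g)) / (1 - (1 - 2 * p) ^ 2 * (1 - g)) ∧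
      (g - (1 - 2 * p) ^ 2 * (1 - g)) / (1 - (1 - 2 * p) ^ 2 * (1 - g)) ≤ 1) ∧
    (0 ≤ 1 / 2 - (1 - 2 * p) * Real.sqrt (1 - (1 - 2 * p) ^ 2 * (1 - g)) /
        (2 * Real.sqrt g) ∧
      1 / 2 - (1 - 2 * p) * Real.sqrt (1 - (1 - 2 * p) ^ 2 * (1 - g)) /
        (2 * Real.sqrt g) ≤ 1) := by
  obtain ⟨hp0, hp1⟩ := hp
  have hq0 : 0 ≤ 1 - 2 * p := by linarith
  have hc1 : (1 - 2 * p) ^ 2 ≤ 1 := pow_le_one₀ hq0 (by linarith)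
  have hcg : (1 - 2 * p) ^ 2 ≤ g * (1 + (1 - 2 * p) ^ 2) :=
    (div_le_iff₀ (by positivity)).1 hg2
  exact ⟨dampingParameter_mem_Icc hg1 hcg,
    dephasingParameter_mem_Icc hq0 (mul_one_sub_mul_one_sub_le_of_le_mul_one_add hc1 hcg)⟩

theorem antidegrading_parameters_valid (p g : ℝ)
    (hp : p ∈ Set.Icc (0 : ℝ) (1/2))
    (hg1 : g ≤ 1) (hg2 : (1 - 2 * p) ^ 2 / (1 + (1 - 2 * p) ^ 2) ≤ g)
    (hg0 : 0 < g) :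
    (0 ≤ (g - (1 - 2 * p) ^ 2 * (1 - g)) / (1 - (1 - 2 * p) ^ 2 * (1 - g)) ∧
      (g - (1 - 2 * p) ^ 2 * (1 - g)) / (1 - (1 - 2 * p) ^ 2 * (1 - g)) ≤ 1) ∧
    (0 ≤ 1 / 2 - (1 - 2 * p) * Real.sqrt (1 - (1 - 2 * p) ^ 2 * (1 - g)) /
        (2 * Real.sqrt g) ∧
      1 / 2 - (1 - 2 * p) * Real.sqrt (1 - (1 - 2 * p) ^ 2 * (1 - g)) /
        (2 * Real.sqrt g) ≤ 1) :=
  antidegrading_parameters_valid_general p g hp hg1 hg2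
end

section
/- For the amplitude damping channel A_g with 0 ≤ g ≤ 1 and input ρ_z = diag((1+z)/2, (1-z)/2) with -1 ≤ z ≤ 1, the coherent information equals I_c(z) = h((1-g)(1-z)/2) - h(g(1-z)/2), where h is the binary entropy. -/
lemma binEnt_eq_binEntropy_div_log_two (x : ℝ) :
    binEnt x = Real.binEntropy x / Real.log 2 := by
  simp only [binEnt, Real.binEntropy, Real.logb, Real.log_inv]
  ring

lemma binEnt_one_sub (x : ℝ) : binEnt (1 - x) = binEnt x := by
  simp only [binEnt_eq_binEntropy_div_log_two, Real.binEntropy_one_sub]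

lemma binEnt_one_add_abs_div_two (r : ℝ) : binEnt ((1 + |r|) / 2) = binEnt ((1 + r) / 2) := by
  rcases abs_cases r with ⟨hr, _⟩ | ⟨hr, _⟩
  · rw [hr]
  · rw [hr, show (1 + -r) / 2 = 1 - (1 + r) / 2 by ring, binEnt_one_sub]

/-- The two arguments on the left are `(1 + |r|)/2` for the output Bloch vectors
`(0, 0, (1-g)z + g)` of `A_g(ρ_z)` and `(0, 0, g - gz - 1)` of `A_g^c(ρ_z)`. -/
theorem damping_coherent_info_diagonal_general (g z : ℝ) :
    binEnt ((1 + |(1 - g) * z + g|) / 2) - binEnt ((1 + |g - g * z - 1|) / 2) =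
      binEnt ((1 - g) * (1 - z) / 2) - binEnt (g * (1 - z) / 2) := by
  rw [binEnt_one_add_abs_div_two, binEnt_one_add_abs_div_two,
    show (1 + ((1 - g) * z + g)) / 2 = 1 - (1 - g) * (1 - z) / 2 by ring,
    show (1 + (g - g * z - 1)) / 2 = g * (1 - z) / 2 by ring,
    binEnt_one_sub]

/-- For the amplitude damping channel `A_g` with diagonal input
`ρ_z = diag((1+z)/2, (1-z)/2)`, the coherent information
`S(A_g(ρ_z)) - S(A_g^c(ρ_z))`, computed from the output Bloch vectors
`(0,0,(1-g)z+g)` and `(0,0,g-gz-1)` via `S = h((1+|r|)/2)`, equals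
`h((1-g)(1-z)/2) - h(g(1-z)/2)`. -/
theorem damping_coherent_info_diagonal (g z : ℝ)
    (hg : g ∈ Set.Icc (0 : ℝ) 1) (hz : z ∈ Set.Icc (-1 : ℝ) 1) :
    binEnt ((1 + |(1 - g) * z + g|) / 2) - binEnt ((1 + |g - g * z - 1|) / 2) =
      binEnt ((1 - g) * (1 - z) / 2) - binEnt (g * (1 - z) / 2) :=
  damping_coherent_info_diagonal_general g z
end
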